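/- arXiv:2306.14670 — 6 statements merged into one kernel-verified Lean document; each statement's English description precedes it below -/
import Mathlib

section
/- In the single-representation game with m ≥ 2 model-providers and Bayes risk α ∈ [0,1/2], the profile where all providers choose the label 1-y* (the non-Bayes-optimal label) is never a pure Nash equilibrium. -/
open Finset

noncomputable def util (m : ℕ) (α : ℝ) (ystar : Bool) (a : Fin m → Bool) (j : Fin m) : ℝ :=
  let k := (Finset.univ.filter (fun i => a i = ystar)).card
  if a j = ystar then (1 - α) / (k : ℝ) else α / ((m - k : ℕ) : ℝ)

def isNash (m : ℕ) (α : ℝ) (ystar : Bool) (a : Fin m → Bool) : Prop :=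
  ∀ (j : Fin m) (b : Bool),
    util m α ystar (Function.update a j b) j ≤ util m α ystar a j

theorem allOpposite_not_nash (m : ℕ) (hm : 2 ≤ m) (α : ℝ) (hα0 : 0 ≤ α) (hα1 : α ≤ 1 / 2)
    (ystar : Bool) :
    ¬ isNash m α ystar (fun _ => !ystar) := by
  intro h
  have hmpos : 0 < m := by omega
  set j : Fin m := ⟨0, hmpos⟩
  have key := h j ystar
  have h1 : util m α ystar (Function.update (fun _ => !ystar) j ystar) j = 1 - α := by
    unfold util
    have hfil : (Finset.univ.filter
        (fun i => Function.update (fun _ => !ystar) j ystar i = ystar)) = {j} := by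
      ext i
      simp only [mem_filter, mem_univ, true_and, Finset.mem_singleton,
        Function.update]
      by_cases hij : i = j <;> simp [hij]
    simp [hfil, Function.update_self]
  have h2 : util m α ystar (fun _ => !ystar) j = α / m := by
    unfold util
    have hfil : (Finset.univ.filter (fun i : Fin m => (!ystar) = ystar)) = ∅ := by
      simp
    simp [hfil]
  rw [h1, h2] at key
  have hαm : α / m ≤ α / 2 := by
    apply div_le_div_of_nonneg_left hα0 (by norm_num)
    exact_mod_cast hm
  nlinarith
end

section
/- In the two-player weighted game with market reputations w_min ≤ w_max, w_min + w_max = 1, and Bayes risk α ∈ [0,1/2] with α > w_min, no pure Nash equilibrium exists. -/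
/-- Payoff of player 1 (reputation `wmax`). -/
def u1 (α wmin wmax : ℝ) (ystar a1 a2 : Bool) : ℝ :=
  if a1 = a2 then wmax else if a1 = ystar then 1 - α else α

/-- Payoff of player 2 (reputation `wmin`). -/
def u2 (α wmin wmax : ℝ) (ystar a1 a2 : Bool) : ℝ :=
  if a1 = a2 then wmin else if a2 = ystar then 1 - α else α

def isNash2 (α wmin wmax : ℝ) (ystar a1 a2 : Bool) : Prop :=
  (∀ b : Bool, u1 α wmin wmax ystar b a2 ≤ u1 α wmin wmax ystar a1 a2) ∧
  (∀ b : Bool, u2 α wmin wmax ystar a1 b ≤ u2 α wmin wmax ystar a1 a2)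

theorem no_pure_nash (α wmin wmax : ℝ) (ystar : Bool)
    (hw0 : 0 < wmin) (hw : wmin ≤ wmax) (hsum : wmin + wmax = 1)
    (hα0 : 0 ≤ α) (hα1 : α ≤ 1 / 2) (hαw : wmin < α) :
    ¬ ∃ a1 a2 : Bool, isNash2 α wmin wmax ystar a1 a2 := by
  rintro ⟨a1, a2, h1, h2⟩
  have g1 := h1 true
  have g2 := h1 false
  have g3 := h2 true
  have g4 := h2 false
  cases a1 <;> cases a2 <;> cases ystar <;>
    simp [u1, u2] at g1 g2 g3 g4 <;> linarith
end

section
/- In the two-player weighted game with w_min < w_max, w_min + w_max = 1, and Bayes risk α ∈ [0,1/2] with α < w_min, choosing y* is a strictly dominant strategy for player 1 (the player with reputation w_max), and the profile (y*, y*) is the unique pure Nash equilibrium. -/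
theorem dominant_and_unique_nash (α wmin wmax : ℝ) (ystar : Bool)
    (hw0 : 0 < wmin) (hw : wmin < wmax) (hsum : wmin + wmax = 1)
    (hα0 : 0 ≤ α) (hα1 : α ≤ 1 / 2) (hαw : α < wmin) :
    (∀ a2 : Bool, u1 α wmin wmax ystar (!ystar) a2 < u1 α wmin wmax ystar ystar a2) ∧
    isNash2 α wmin wmax ystar ystar ystar ∧
    (∀ a1 a2 : Bool, isNash2 α wmin wmax ystar a1 a2 → a1 = ystar ∧ a2 = ystar) := by
  refine ⟨?_, ⟨?_, ?_⟩, ?_⟩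
  · intro a2; cases ystar <;> cases a2 <;> simp [u1] <;> linarith
  · intro b; cases ystar <;> cases b <;> simp [u1] <;> linarith
  · intro b; cases ystar <;> cases b <;> simp [u2] <;> linarith
  · intro a1 a2 ⟨h1, h2⟩
    cases ystar <;> cases a1 <;> cases a2 <;> simp_all [u1, u2] <;> linarith
end

section
/- In the two-player weighted game with w_min < w_max = 1 - w_min and w_min < α ≤ 1/2 ≤ w_max, if (p₁, p₂) are the probabilities that players 1 and 2 respectively place on label y* in a mixed Nash equilibrium, then p₁ = (w_max - α)/(1 - 2·w_min) and p₂ = (α - w_min)/(1 - 2·w_min), and moreover p₁ + p₂ = 1. -/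
/-!
A player's expected payoff is affine in her own mixing probability, so she mixes only when
indifferent between her two labels. Neither pure strategy of player 1 survives: against a pure
strategy of player 1, player 2 has a unique pure best response, against which player 1 would
switch. Hence player 1 mixes, her indifference determines `p₂`, which lies strictly between
`0` and `1`, so player 2 is indifferent as well, and that determines `p₁`.
-/

open Set

/-- Expected payoff of player 1 when player 1 plays `y*` with probability `p` and
player 2 plays `y*` with probability `q`. -/
def U1 (α wmin wmax p q : ℝ) : ℝ :=
  p * (q * wmax + (1 - q) * (1 - α)) + (1 - p) * (q * α + (1 - q) * wmax)

/-- Expected payoff of player 2. -/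
def U2 (α wmin wmax p q : ℝ) : ℝ :=
  q * (p * wmin + (1 - p) * (1 - α)) + (1 - q) * (p * α + (1 - p) * wmin)

/-- Mixed Nash equilibrium in terms of probabilities `p, q` of playing `y*`. -/
def isMixedNash (α wmin wmax p q : ℝ) : Prop :=
  p ∈ Set.Icc (0 : ℝ) 1 ∧ q ∈ Set.Icc (0 : ℝ) 1 ∧
  (∀ p' ∈ Set.Icc (0 : ℝ) 1, U1 α wmin wmax p' q ≤ U1 α wmin wmax p q) ∧
  (∀ q' ∈ Set.Icc (0 : ℝ) 1, U2 α wmin wmax p q' ≤ U2 α wmin wmax p q)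

/-- Playing the first of two actions, worth `a` and `b`, with probability `x` is optimal. -/
def IsBestMix (a b x : ℝ) : Prop :=
  ∀ x' ∈ Icc (0 : ℝ) 1, x' * a + (1 - x') * b ≤ x * a + (1 - x) * b

namespace IsBestMix

variable {a b x : ℝ}

theorem one_le (h : IsBestMix a b x) (hba : b < a) : 1 ≤ x := by
  have := h 1 ⟨zero_le_one, le_rfl⟩
  nlinarith

theorem nonpos (h : IsBestMix a b x) (hab : a < b) : x ≤ 0 := by
  have := h 0 ⟨le_rfl, zero_le_one⟩
  nlinarith

theorem eq_of_mem_Ioo (h : IsBestMix a b x) (hx : x ∈ Ioo 0 1) : a = b := by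
  rcases lt_trichotomy a b with hab | hab | hab
  · exact absurd (h.nonpos hab) hx.1.not_ge
  · exact hab
  · exact absurd (h.one_le hab) hx.2.not_ge

end IsBestMix

namespace isMixedNash

variable {α wmin wmax p q : ℝ}

theorem isBestMix_fst (h : isMixedNash α wmin wmax p q) :
    IsBestMix (q * wmax + (1 - q) * (1 - α)) (q * α + (1 - q) * wmax) p :=
  h.2.2.1

theorem isBestMix_snd (h : isMixedNash α wmin wmax p q) :
    IsBestMix (p * wmin + (1 - p) * (1 - α)) (p * α + (1 - p) * wmin) q :=
  h.2.2.2

theorem fst_mem_Ioo (h : isMixedNash α wmin wmax p q) (hsum : wmin + wmax = 1)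
    (hαmin : wmin < α) (hαmax : α < wmax) : p ∈ Ioo 0 1 := by
  have h₁ := h.isBestMix_fst
  have h₂ := h.isBestMix_snd
  obtain ⟨⟨hp₀, hp₁⟩, ⟨hq₀, hq₁⟩, -, -⟩ := h
  constructor
  · by_contra! hp
    obtain rfl : p = 0 := le_antisymm hp hp₀
    obtain rfl : q = 1 := le_antisymm hq₁ (h₂.one_le (by linarith))
    linarith [h₁.one_le (by linarith)]
  · by_contra! hp
    obtain rfl : p = 1 := le_antisymm hp₁ hp
    obtain rfl : q = 0 := le_antisymm (h₂.nonpos (by linarith)) hq₀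
    linarith [h₁.nonpos (by linarith)]

end isMixedNash

theorem mixed_nash_probabilities_general (α wmin wmax p₁ p₂ : ℝ)
    (hsum : wmin + wmax = 1)
    (hαw : wmin < α) (hα1 : α ≤ 1 / 2)
    (hnash : isMixedNash α wmin wmax p₁ p₂) :
    p₁ = (wmax - α) / (1 - 2 * wmin) ∧
    p₂ = (α - wmin) / (1 - 2 * wmin) ∧
    p₁ + p₂ = 1 := by
  have hαmax : α < wmax := by linarith
  have hD : 0 < 1 - 2 * wmin := by linarith
  have hp₁_mem := hnash.fst_mem_Ioo hsum hαw hαmax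
  have hp₂ : p₂ = (α - wmin) / (1 - 2 * wmin) := by
    rw [eq_div_iff hD.ne']
    linear_combination hnash.isBestMix_fst.eq_of_mem_Ioo hp₁_mem + (1 - 2 * p₂) * hsum
  have hp₂_mem : p₂ ∈ Ioo 0 1 := by
    rw [hp₂]
    exact ⟨div_pos (by linarith) hD, (div_lt_one hD).2 (by linarith)⟩
  have hp₁ : p₁ = (wmax - α) / (1 - 2 * wmin) := by
    rw [eq_div_iff hD.ne']
    linear_combination -hnash.isBestMix_snd.eq_of_mem_Ioo hp₂_mem - hsum
  refine ⟨hp₁, hp₂, ?_⟩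
  rw [hp₁, hp₂, ← add_div, div_eq_one_iff_eq hD.ne']
  linarith

theorem mixed_nash_probabilities (α wmin wmax p₁ p₂ : ℝ)
    (hw0 : 0 < wmin) (hw : wmin < wmax) (hsum : wmin + wmax = 1)
    (hαw : wmin < α) (hα1 : α ≤ 1 / 2)
    (hnash : isMixedNash α wmin wmax p₁ p₂) :
    p₁ = (wmax - α) / (1 - 2 * wmin) ∧
    p₂ = (α - wmin) / (1 - 2 * wmin) ∧
    p₁ + p₂ = 1 :=
  mixed_nash_probabilities_general α wmin wmax p₁ p₂ hsum hαw hα1 hnash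
end

section
/- In the two-player weighted game with w_min < α ≤ 1/2 and w_max = 1 - w_min > 1/2, the expected social loss at the mixed equilibrium equals p₁·p₂ = (α - w_min)·(w_max - α)/(1 - 2·w_min)², where p₁ = (w_max - α)/(1 - 2·w_min) and p₂ = (α - w_min)/(1 - 2·w_min). Specifically, α·p₁·p₂ + (1-α)·(1-p₁)·(1-p₂) = p₁·p₂. -/
/-! Since w_max = 1 - w_min, the two mixing probabilities satisfy p₁ + p₂ = 1, so 1 - p₁ = p₂ and
1 - p₂ = p₁: both coordination outcomes then have probability p₁·p₂, and the losses α and 1 - α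
average to p₁·p₂. -/

theorem mul_mul_add_one_sub_mul_one_sub_mul_one_sub_eq_mul_of_add_eq_one {R : Type*} [CommRing R]
    {a p q : R} (h : p + q = 1) : a * p * q + (1 - a) * (1 - p) * (1 - q) = p * q := by
  obtain rfl : q = 1 - p := eq_sub_of_add_eq' h
  ring

theorem expected_social_loss_formula_general (α wmin wmax : ℝ)
    (hw : wmin < 1 / 2) (hmax : wmax = 1 - wmin) :
    let p₁ := (wmax - α) / (1 - 2 * wmin)
    let p₂ := (α - wmin) / (1 - 2 * wmin)
    α * p₁ * p₂ + (1 - α) * (1 - p₁) * (1 - p₂) = p₁ * p₂ ∧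
    p₁ * p₂ = (α - wmin) * (wmax - α) / (1 - 2 * wmin) ^ 2 := by
  intro p₁ p₂
  have hd : 1 - 2 * wmin ≠ 0 := by linarith
  have hsum : p₁ + p₂ = 1 := by
    rw [← add_div, div_eq_one_iff_eq hd, hmax]
    ring
  exact ⟨mul_mul_add_one_sub_mul_one_sub_mul_one_sub_eq_mul_of_add_eq_one hsum,
    by rw [div_mul_div_comm, sq, mul_comm (wmax - α)]⟩

theorem expected_social_loss_formula (α wmin wmax : ℝ)
    (hw0 : 0 < wmin) (hw : wmin < 1 / 2) (hmax : wmax = 1 - wmin)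
    (hαw : wmin < α) (hα1 : α ≤ 1 / 2) :
    let p₁ := (wmax - α) / (1 - 2 * wmin)
    let p₂ := (α - wmin) / (1 - 2 * wmin)
    α * p₁ * p₂ + (1 - α) * (1 - p₁) * (1 - p₂) = p₁ * p₂ ∧
    p₁ * p₂ = (α - wmin) * (wmax - α) / (1 - 2 * wmin) ^ 2 :=
  expected_social_loss_formula_general α wmin wmax hw hmax
end

section
/- In the single-representation game with m ≥ 3 providers and 1/m < α ≤ 1/2, every pure Nash equilibrium profile has at least one provider choosing y* and at least one choosing 1-y*; consequently the social loss at every pure Nash equilibrium is 0. -/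
open Finset

noncomputable def socialLoss (m : ℕ) (α : ℝ) (ystar : Bool) (a : Fin m → Bool) : ℝ :=
  let k := (Finset.univ.filter (fun i => a i = ystar)).card
  if k = m then α else if k = 0 then 1 - α else 0

theorem heterogeneous_equilibrium (m : ℕ) (hm : 3 ≤ m) (α : ℝ)
    (hαm : 1 / m < α) (hα1 : α ≤ 1 / 2) (ystar : Bool) (a : Fin m → Bool)
    (ha : isNash m α ystar a) :
    (∃ j, a j = ystar) ∧ (∃ j, a j = !ystar) ∧ socialLoss m α ystar a = 0 := by
  have hm0 : (3:ℝ) ≤ (m:ℝ) := by exact_mod_cast hm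
  have hmpos : (0:ℝ) < m := by linarith
  have hα0 : 0 < α := lt_trans (by positivity) hαm
  set S := Finset.univ.filter (fun i => a i = ystar) with hS
  -- k > 0
  have hpos : ∃ j, a j = ystar := by
    by_contra h
    push_neg at h
    set j : Fin m := ⟨0, by omega⟩ with hj
    have hcard0 : S.card = 0 := by
      rw [Finset.card_eq_zero]
      ext i; simp [hS, h i]
    have hnash := ha j ystar
    have h1 : util m α ystar (Function.update a j ystar) j = (1 - α) / 1 := by
      have hset : (Finset.univ.filter (fun i => Function.update a j ystar i = ystar)) = {j} := by
        ext i
        simp only [Finset.mem_filter, Finset.mem_univ, true_and, Finset.mem_singleton]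
        constructor
        · intro hi
          by_contra hij
          rw [Function.update_of_ne hij] at hi
          exact h i hi
        · intro hi; subst hi; simp
      simp [util, hset]
    have h2 : util m α ystar a j = α / m := by
      simp [util, ← hS, hcard0, h j]
    rw [h1, h2] at hnash
    have hle : (1 - α) * m ≤ α := by
      rw [div_le_div_iff₀ one_pos hmpos] at hnash
      linarith
    nlinarith
  -- k < m
  have hneg : ∃ j, a j = !ystar := by
    by_contra h
    push_neg at h
    have hall : ∀ i, a i = ystar := by
      intro i
      have := h i
      cases hai : a i <;> cases ystar <;> simp_all
    set j : Fin m := ⟨0, by omega⟩ with hj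
    have hcardm : S.card = m := by
      have : S = Finset.univ := by
        ext i; simp [hS, hall i]
      simp [this]
    have hnash := ha j (!ystar)
    have h1 : util m α ystar (Function.update a j (!ystar)) j = α / 1 := by
      have hset : (Finset.univ.filter (fun i => Function.update a j (!ystar) i = ystar))
          = Finset.univ.erase j := by
        ext i
        simp only [Finset.mem_filter, Finset.mem_univ, true_and, Finset.mem_erase, and_true]
        constructor
        · intro hi hij
          subst hij
          simp at hi
        · intro hij
          rw [Function.update_of_ne hij]
          exact hall i
      have hcard : (Finset.univ.filter (fun i => Function.update a j (!ystar) i = ystar)).card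
          = m - 1 := by
        rw [hset, Finset.card_erase_of_mem (Finset.mem_univ j)]
        simp
      have hmm : m - (m - 1) = 1 := by omega
      simp [util, hcard, hmm]
    have h2 : util m α ystar a j = (1 - α) / m := by
      simp [util, ← hS, hcardm, hall j]
    rw [h1, h2] at hnash
    have hle : α * m ≤ 1 - α := by
      rw [div_le_div_iff₀ one_pos hmpos] at hnash
      linarith
    have h1m : 1 < α * m := by
      rw [div_lt_iff₀ hmpos] at hαm
      linarith
    nlinarith
  refine ⟨hpos, hneg, ?_⟩
  obtain ⟨j1, hj1⟩ := hpos
  obtain ⟨j2, hj2⟩ := hneg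
  have hne0 : S.card ≠ 0 := by
    rw [Finset.card_ne_zero]
    exact ⟨j1, by simp [hS, hj1]⟩
  have hnem : S.card ≠ m := by
    intro hc
    have : S = Finset.univ := Finset.eq_univ_of_card S (by simp [hc])
    have : j2 ∈ S := this ▸ Finset.mem_univ j2
    simp [hS, hj2] at this
  simp [socialLoss, ← hS, hne0, hnem]
end
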